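/- arXiv:1010.2926 — 4 statements merged into one kernel-verified Lean document; each statement's English description precedes it below -/
import Mathlib

section
/- Let K be a hexagonal trefoil knot with vertices labeled so that the Huh–Jeon intersection pattern holds. Let P2 and P5 be the planes of the triangular disks Δ2 and Δ5. Then the interior of edge e12 meets the plane P5 in exactly one point. -/
noncomputable section

/-- Points of ℝ³. -/
abbrev E3 : Type := Fin 3 → ℝ

/-- A line in ℝ³: the affine span of two distinct points, viewed as a set. -/
def IsLine (L : Set E3) : Prop :=
  ∃ p q : E3, p ≠ q ∧ L = (affineSpan ℝ ({p, q} : Set E3) : Set E3)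

/-- A plane: an affine subspace of dimension 2. -/
def IsPlane (P : AffineSubspace ℝ E3) : Prop :=
  Module.finrank ℝ P.direction = 2

/-- A (combinatorial) hexagon: six vertices in ℝ³, joined cyclically.
Paper vertex `v_i` corresponds to `v (i-1)`, paper edge `e_{i,i+1}` to `edge (i-1)`,
paper disk `Δ_i` to `disk (i-1)`, paper plane `P_i` to `P (i-1)`. -/
structure Hexagon where
  v : Fin 6 → E3

namespace Hexagon

variable (H : Hexagon)

/-- The closed edge from `v i` to `v (i+1)`. -/
def edge (i : Fin 6) : Set E3 := segment ℝ (H.v i) (H.v (i + 1))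

/-- The open edge (interior of the edge) from `v i` to `v (i+1)`. -/
def intEdge (i : Fin 6) : Set E3 := openSegment ℝ (H.v i) (H.v (i + 1))

/-- The hexagonal closed polygonal curve: union of the six edges. -/
def K : Set E3 := ⋃ i, H.edge i

/-- The triangular disk with vertices `v (i-1)`, `v i`, `v (i+1)`. -/
def disk (i : Fin 6) : Set E3 := convexHull ℝ ({H.v (i - 1), H.v i, H.v (i + 1)} : Set E3)

/-- The plane through `v (i-1)`, `v i`, `v (i+1)`. -/
def P (i : Fin 6) : AffineSubspace ℝ E3 :=
  affineSpan ℝ ({H.v (i - 1), H.v i, H.v (i + 1)} : Set E3)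

/-- General position: no three vertices collinear, no four vertices coplanar. -/
def GeneralPosition : Prop :=
  (∀ i j k : Fin 6, i ≠ j → i ≠ k → j ≠ k →
    ¬ Collinear ℝ ({H.v i, H.v j, H.v k} : Set E3)) ∧
  (∀ i j k l : Fin 6, i ≠ j → i ≠ k → i ≠ l → j ≠ k → j ≠ l → k ≠ l →
    ¬ Coplanar ℝ ({H.v i, H.v j, H.v k, H.v l} : Set E3))

/-- The Huh–Jeon intersection pattern: the only nonempty intersections of open edges with
interiors of triangular disks are `int e23 ∩ int Δ5`, `int e23 ∩ int Δ6`, `int e45 ∩ int Δ1`,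
`int e45 ∩ int Δ2`, `int e61 ∩ int Δ3`, `int e61 ∩ int Δ4` (in the paper's labels). -/
def HuhJeon : Prop :=
  ∀ i j : Fin 6, (H.intEdge i ∩ intrinsicInterior ℝ (H.disk j)).Nonempty ↔
    (i, j) ∈ ({(1, 4), (1, 5), (3, 0), (3, 1), (5, 2), (5, 3)} : Set (Fin 6 × Fin 6))

/-- The candidate quadrisecant line `L_{k+1}` of the paper: the intersection of the planes
`P (k+1)` and `P (k+4)` (for `k = 0, 1, 2`).  `QLine 0` is the paper's `L₁ = P₂ ∩ P₅`,
`QLine 1` is `L₂ = P₃ ∩ P₆`, and `QLine 2` is `L₃ = P₄ ∩ P₁`. -/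
def QLine (k : Fin 6) : Set E3 := (H.P (k + 1) : Set E3) ∩ (H.P (k + 4) : Set E3)

end Hexagon

/-- `L` is a quadrisecant of the curve `K`: a line meeting `K` in at least four points. -/
def IsQuadrisecantOf (K L : Set E3) : Prop :=
  IsLine L ∧ ∃ S : Finset E3, S.card = 4 ∧ (S : Set E3) ⊆ K ∩ L

/-- A quadrisecant of the hexagonal knot `H`. -/
def Hexagon.IsQuadrisecant (H : Hexagon) (L : Set E3) : Prop :=
  IsQuadrisecantOf H.K L

/-- A standard parametrization of the trefoil knot. -/
def trefoilCurve (t : ℝ) : E3 :=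
  ![Real.sin t + 2 * Real.sin (2 * t), Real.cos t - 2 * Real.cos (2 * t), - Real.sin (3 * t)]

/-- The standard trefoil knot as a subset of ℝ³. -/
def TrefoilSet : Set E3 := Set.range trefoilCurve

/-- The standard planar round circle (the unknot). -/
def UnknotSet : Set E3 := {x : E3 | x 0 ^ 2 + x 1 ^ 2 = 1 ∧ x 2 = 0}

/-- Two subsets of ℝ³ are equivalent as knots if there is an ambient isotopy of ℝ³
carrying one onto the other. -/
def KnotEquiv (K₁ K₂ : Set E3) : Prop :=
  ∃ F : ℝ → (E3 ≃ₜ E3), Continuous (fun p : ℝ × E3 => F p.1 p.2) ∧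
    F 0 = Homeomorph.refl E3 ∧ (F 1) '' K₁ = K₂

/-- `K` has the knot type of the trefoil. -/
def IsTrefoil (K : Set E3) : Prop := KnotEquiv K TrefoilSet

/-- `K` is an unknot: it has the knot type of a planar circle. -/
def IsUnknot (K : Set E3) : Prop := KnotEquiv K UnknotSet

/-- The closed polygonal curve with vertices `v 0, …, v (n-1)` joined cyclically. -/
def polyCurve (n : ℕ) [NeZero n] (v : Fin n → E3) : Set E3 :=
  ⋃ i, segment ℝ (v i) (v (i + 1))

/-- `v` determines an embedded (simple) closed polygonal curve: distinct vertices,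
adjacent edges meet exactly at their common vertex, non-adjacent edges are disjoint. -/
def IsSimplePolygon (n : ℕ) [NeZero n] (v : Fin n → E3) : Prop :=
  3 ≤ n ∧ Function.Injective v ∧
  (∀ i : Fin n,
    segment ℝ (v i) (v (i + 1)) ∩ segment ℝ (v (i + 1)) (v (i + 2)) = {v (i + 1)}) ∧
  (∀ i j : Fin n, j ≠ i → j ≠ i + 1 → j + 1 ≠ i →
    segment ℝ (v i) (v (i + 1)) ∩ segment ℝ (v j) (v (j + 1)) = ∅)

namespace Hexagon

/-- The quadrisecant approximation determined by marked points `c i`, `d i` on edge `i`: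
`O i = [c i, d i]` (straightened part of edge `i`) and `N i = [d (i-1), c i]`
(the segment cutting the corner at `v i`). -/
def QA (H : Hexagon) (c d : Fin 6 → E3) : Set E3 :=
  (⋃ i, segment ℝ (c i) (d i)) ∪ (⋃ i, segment ℝ (d (i - 1)) (c i))

/-- `c i`, `d i` are exactly the quadrisecant points on edge `i`, occurring in the
order `v i, c i, d i, v (i+1)` along the edge. -/
def QAData (H : Hexagon) (c d : Fin 6 → E3) : Prop :=
  ∀ i : Fin 6,
    ({c i, d i} : Set E3) = H.edge i ∩ (H.QLine 0 ∪ H.QLine 1 ∪ H.QLine 2) ∧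
    Sbtw ℝ (H.v i) (c i) (d i) ∧ Sbtw ℝ (c i) (d i) (H.v (i + 1))

end Hexagon

/-!
In the paper's labels: `e23` pierces `Δ5`, so `v2` and `v3` lie strictly on opposite sides of
`P5`. The edge `e61` pierces `Δ4 = conv{v3, v4, v5}`; as `v6 ∈ P5`, the piercing point lies
strictly on the side of `v1`, and as `v4, v5 ∈ P5`, it lies weakly on the side of `v3`. Hence
`v1` and `v3` are on the same side, so `v1` and `v2` are on opposite sides of `P5`, and the
open edge `e12` crosses `P5` exactly once because `v1 ∉ P5`.
-/

namespace AffineSubspace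

section

variable {R V P : Type*} [Field R] [PartialOrder R] [AddCommGroup V] [Module R V] [AddTorsor V P]

theorem eq_of_wbtw_of_mem {s : AffineSubspace R P} {x y p q : P} (hx : x ∉ s)
    (hp : Wbtw R x p y) (hq : Wbtw R x q y) (hps : p ∈ s) (hqs : q ∈ s) : p = q := by
  by_contra hpq
  have hcol : Collinear R {p, q, x, y} :=
    collinear_insert_insert_of_mem_affineSpan_pair hp.mem_affineSpan hq.mem_affineSpan
  have hxpq : x ∈ line[R, p, q] := hcol.mem_affineSpan_of_mem_of_ne (by simp) (by simp)
    (by simp) hpq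
  exact hx (affineSpan_pair_le_of_mem_of_mem hps hqs hxpq)

end

variable {𝕜 E : Type*} [Field 𝕜] [LinearOrder 𝕜] [IsStrictOrderedRing 𝕜]
  [AddCommGroup E] [Module 𝕜 E] {s : AffineSubspace 𝕜 E}

theorem SOppSide.existsUnique_mem_openSegment {x y : E} (h : s.SOppSide x y) :
    ∃! p, p ∈ openSegment 𝕜 x y ∩ s := by
  obtain ⟨p, hps, hp⟩ := h.exists_sbtw
  refine ⟨p, ⟨?_, hps⟩, fun q ⟨hq, hqs⟩ => ?_⟩
  · rw [openSegment_eq_image_lineMap]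
    exact hp.mem_image_Ioo
  · exact eq_of_wbtw_of_mem h.left_notMem
      (mem_segment_iff_wbtw.mp (openSegment_subset_segment _ _ _ hq)) hp.wbtw hqs hps

theorem sOppSide_of_mem_openSegment {x y p : E} (hp : p ∈ openSegment 𝕜 x y) (hps : p ∈ s)
    (hx : x ∉ s) (hy : y ∉ s) : s.SOppSide x y :=
  ⟨(mem_segment_iff_wbtw.mp (openSegment_subset_segment _ _ _ hp)).wOppSide₁₃ hps, hx, hy⟩

theorem sSameSide_of_mem_openSegment {x y p : E} (hp : p ∈ openSegment 𝕜 x y) (hx : x ∈ s)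
    (hy : y ∉ s) : s.SSameSide p y := by
  rw [openSegment_eq_image_lineMap] at hp
  obtain ⟨t, ht, rfl⟩ := hp
  exact sSameSide_lineMap_left hx hy ht.1

theorem wSameSide_of_mem_convexHull_insert {t : Set E} {z q : E} (ht : t.Nonempty)
    (hts : t ⊆ s) (hq : q ∈ convexHull 𝕜 (insert z t)) : s.WSameSide q z := by
  rw [convexHull_insert ht, mem_convexJoin] at hq
  obtain ⟨z', rfl, w, hw, hqw⟩ := hq
  have hws : w ∈ s := convexHull_min hts s.convex hw
  exact (mem_segment_iff_wbtw.mp hqw).wSameSide₂₁ hws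

end AffineSubspace

namespace Hexagon

open AffineSubspace

variable (H : Hexagon)

theorem v_mem_P_sub_one (i : Fin 6) : H.v (i - 1) ∈ H.P i :=
  mem_affineSpan ℝ (by simp)

theorem v_mem_P (i : Fin 6) : H.v i ∈ H.P i :=
  mem_affineSpan ℝ (by simp)

theorem v_mem_P_add_one (i : Fin 6) : H.v (i + 1) ∈ H.P i :=
  mem_affineSpan ℝ (by simp)

theorem disk_subset_P (i : Fin 6) : H.disk i ⊆ H.P i :=
  convexHull_subset_affineSpan _

variable {H}

theorem v_notMem_P (hgp : H.GeneralPosition) {i j : Fin 6} (h₁ : j ≠ i - 1) (h₂ : j ≠ i)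
    (h₃ : j ≠ i + 1) : H.v j ∉ H.P i := by
  intro hj
  obtain ⟨h₁₂, h₁₃, h₂₃⟩ :=
    (by decide : ∀ i : Fin 6, i - 1 ≠ i ∧ i - 1 ≠ i + 1 ∧ i ≠ i + 1) i
  exact hgp.2 j (i - 1) i (i + 1) h₁ h₂ h₃ h₁₂ h₁₃ h₂₃
    ((coplanar_insert_iff_of_mem_affineSpan hj).mpr (coplanar_triple ℝ _ _ _))

theorem sOppSide_v1_v2 (hgp : H.GeneralPosition) (hhj : H.HuhJeon) :
    (H.P 4).SOppSide (H.v 1) (H.v 2) := by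
  obtain ⟨p, hp, hpΔ⟩ := (hhj 1 4).mpr (by simp)
  exact sOppSide_of_mem_openSegment hp (H.disk_subset_P 4 (intrinsicInterior_subset hpΔ))
    (v_notMem_P hgp (by decide) (by decide) (by decide))
    (v_notMem_P hgp (by decide) (by decide) (by decide))

theorem sSameSide_v0_v2 (hgp : H.GeneralPosition) (hhj : H.HuhJeon) :
    (H.P 4).SSameSide (H.v 0) (H.v 2) := by
  obtain ⟨q, hq, hqΔ⟩ := (hhj 5 3).mpr (by simp)
  have hv0 : H.v 0 ∉ H.P 4 := v_notMem_P hgp (by decide) (by decide) (by decide)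
  have hq_v0 : (H.P 4).SSameSide q (H.v 0) :=
    sSameSide_of_mem_openSegment hq (H.v_mem_P_add_one 4) hv0
  have hq_v2 : (H.P 4).WSameSide q (H.v 2) := by
    refine wSameSide_of_mem_convexHull_insert (Set.insert_nonempty _ _) ?_
      (intrinsicInterior_subset hqΔ)
    rintro _ (rfl | rfl)
    exacts [H.v_mem_P_sub_one 4, H.v_mem_P 4]
  exact ⟨hq_v0.symm.trans_wSameSide hq_v2, hv0,
    v_notMem_P hgp (by decide) (by decide) (by decide)⟩

end Hexagon

theorem stmt4_general (H : Hexagon) (hgp : H.GeneralPosition) (hhj : H.HuhJeon) :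
    ∃! x : E3, x ∈ H.intEdge 0 ∩ (H.P 4 : Set E3) :=
  ((Hexagon.sSameSide_v0_v2 hgp hhj).trans_sOppSide
    (Hexagon.sOppSide_v1_v2 hgp hhj).symm).existsUnique_mem_openSegment

/-- For a hexagonal trefoil knot with the Huh–Jeon pattern, the interior of the
edge `e12` meets the plane `P5` (through `v4, v5, v6`) in exactly one point. -/
theorem stmt4 (H : Hexagon) (hgp : H.GeneralPosition) (hhj : H.HuhJeon)
    (htre : IsTrefoil H.K) :
    ∃! x : E3, x ∈ H.intEdge 0 ∩ (H.P 4 : Set E3) :=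
  stmt4_general H hgp hhj
end
end

section
/- Let K be a hexagonal trefoil knot with the Huh–Jeon intersection pattern and let P5 be the plane through v4, v5, v6. Then v3 and v1 lie strictly on the same side of P5 (the side opposite to v2). -/
noncomputable section

lemma hexagon_not_mem_span (H : Hexagon) (hgp : H.GeneralPosition) {i a b c : Fin 6}
    (hia : i ≠ a) (hib : i ≠ b) (hic : i ≠ c) (hab : a ≠ b) (hac : a ≠ c) (hbc : b ≠ c) :
    H.v i ∉ affineSpan ℝ ({H.v a, H.v b, H.v c} : Set E3) := by
  intro h
  exact hgp.2 i a b c hia hib hic hab hac hbc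
    ((coplanar_insert_iff_of_mem_affineSpan h).2 (coplanar_triple ℝ (H.v a) (H.v b) (H.v c)))

/-- For a hexagonal trefoil knot with the Huh–Jeon pattern, the vertices `v3`
and `v1` lie strictly on the same side of the plane `P5` (through `v4, v5, v6`), the side
opposite to `v2`.  (Paper's `v1,v2,v3` are `v 0, v 1, v 2` here, `P5` is `P 4`.) -/
theorem stmt5 (H : Hexagon) (hgp : H.GeneralPosition) (hhj : H.HuhJeon)
    (htre : IsTrefoil H.K) :
    (H.P 4).SSameSide (H.v 2) (H.v 0) ∧ (H.P 4).SOppSide (H.v 2) (H.v 1) := by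
  have hP : H.P 4 = affineSpan ℝ ({H.v 3, H.v 4, H.v 5} : Set E3) := rfl
  have h2 : H.v 2 ∉ H.P 4 := by
    rw [hP]; exact hexagon_not_mem_span H hgp (by decide) (by decide) (by decide)
      (by decide) (by decide) (by decide)
  have h1 : H.v 1 ∉ H.P 4 := by
    rw [hP]; exact hexagon_not_mem_span H hgp (by decide) (by decide) (by decide)
      (by decide) (by decide) (by decide)
  have h0 : H.v 0 ∉ H.P 4 := by
    rw [hP]; exact hexagon_not_mem_span H hgp (by decide) (by decide) (by decide)
      (by decide) (by decide) (by decide)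
  have hv3 : H.v 3 ∈ H.P 4 := by
    rw [hP]; exact subset_affineSpan ℝ _ (by simp)
  have hv4 : H.v 4 ∈ H.P 4 := by
    rw [hP]; exact subset_affineSpan ℝ _ (by simp)
  have hv5 : H.v 5 ∈ H.P 4 := by
    rw [hP]; exact subset_affineSpan ℝ _ (by simp)
  -- the point y on the open edge e23 inside Δ5
  obtain ⟨y, hy1, hy2⟩ : (H.intEdge 1 ∩ intrinsicInterior ℝ (H.disk 4)).Nonempty :=
    (hhj 1 4).mpr (by simp)
  have hy2' : y ∈ H.P 4 := by
    rw [hP]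
    exact convexHull_subset_affineSpan _ (intrinsicInterior_subset hy2)
  have hyseg : y ∈ segment ℝ (H.v 1) (H.v 2) := by
    have := openSegment_subset_segment ℝ (H.v 1) (H.v (1 + 1)) hy1
    simpa using this
  have hopp : (H.P 4).SOppSide (H.v 2) (H.v 1) := by
    refine ⟨?_, h2, h1⟩
    rw [AffineSubspace.wOppSide_iff_exists_wbtw]
    exact ⟨y, hy2', mem_segment_iff_wbtw.1 (by rwa [segment_symm])⟩
  -- the point x on the open edge e61 inside Δ4
  obtain ⟨x, hx1, hx2⟩ : (H.intEdge 5 ∩ intrinsicInterior ℝ (H.disk 3)).Nonempty :=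
    (hhj 5 3).mpr (by simp)
  have hx1' : x ∈ openSegment ℝ (H.v 5) (H.v 0) := by
    have : x ∈ openSegment ℝ (H.v 5) (H.v (5 + 1)) := hx1
    simpa using this
  obtain ⟨s, t, hs0, ht0, hst, hxeq⟩ := hx1'
  have hxdef : x = s • H.v 5 + t • H.v 0 := hxeq.symm
  -- x is not on the plane P4
  have hxP : x ∉ H.P 4 := by
    intro hxm
    apply h0
    have hmem := (H.P 4).smul_vsub_vadd_mem t⁻¹ hxm hv5 hv5
    have : t⁻¹ • (x -ᵥ H.v 5) +ᵥ H.v 5 = H.v 0 := by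
      have hs : s = 1 - t := by linarith
      simp only [vsub_eq_sub, vadd_eq_add, hxdef, hs]
      funext k
      simp [smul_eq_mul]
      field_simp
      ring
    rwa [this] at hmem
  -- x is strictly on the same side as v 0
  have hsame0 : (H.P 4).SSameSide x (H.v 0) := by
    refine ⟨⟨H.v 5, hv5, H.v 5, hv5, ?_⟩, hxP, h0⟩
    have : x -ᵥ H.v 5 = t • (H.v 0 -ᵥ H.v 5) := by
      have hs : s = 1 - t := by linarith
      simp only [vsub_eq_sub, hxdef, hs]
      funext k
      simp [smul_eq_mul]
      ring
    rw [this]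
    exact SameRay.sameRay_nonneg_smul_left _ ht0.le
  -- x is strictly on the same side as v 2
  have hxhull : x ∈ convexHull ℝ ({H.v 2, H.v 3, H.v 4} : Set E3) := by
    have : x ∈ H.disk 3 := intrinsicInterior_subset hx2
    simpa [Hexagon.disk] using this
  rw [convexHull_insert ⟨H.v 3, by simp⟩, mem_convexJoin] at hxhull
  obtain ⟨a, ha, m, hm, hxm⟩ := hxhull
  rw [Set.mem_singleton_iff] at ha
  subst ha
  have hmP : m ∈ H.P 4 := by
    have hsub : convexHull ℝ ({H.v 3, H.v 4} : Set E3) ⊆ (H.P 4 : Set E3) := by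
      apply convexHull_min ?_ (AffineSubspace.convex _)
      rintro z (rfl | rfl)
      · exact hv3
      · exact hv4
    exact hsub hm
  obtain ⟨u, w, hu0, hw0, huw, hxc⟩ := hxm
  have hu : 0 < u := by
    rcases hu0.lt_or_eq with h | h
    · exact h
    · exfalso
      apply hxP
      have : x = m := by
        rw [← hxc, ← h]
        simp only [zero_smul, zero_add]
        have hw : w = 1 := by linarith
        rw [hw, one_smul]
      rw [this]
      exact hmP
  have hsame2 : (H.P 4).SSameSide x (H.v 2) := by
    refine ⟨⟨m, hmP, m, hmP, ?_⟩, hxP, h2⟩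
    have : x -ᵥ m = u • (H.v 2 -ᵥ m) := by
      have hw : w = 1 - u := by linarith
      rw [← hxc, hw]
      funext k
      simp [vsub_eq_sub, smul_eq_mul]
      ring
    rw [this]
    exact SameRay.sameRay_nonneg_smul_left _ hu.le
  exact ⟨hsame2.symm.trans hsame0, hopp⟩
end
end

section
/- If a quadrisecant L of a hexagonal knot K in general position meets the four edges e12, e23, e45, e56 in their interiors, then L is contained in both the plane P2 through v1,v2,v3 and the plane P5 through v4,v5,v6; hence L = P2 ∩ P5 and such a quadrisecant is unique. -/
noncomputable section

section Aux

/-- A point of an open segment lies in the affine span of the endpoints. -/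
lemma openSeg_mem_span {u v x : E3} (h : x ∈ openSegment ℝ u v) :
    x ∈ affineSpan ℝ ({u, v} : Set E3) := by
  have : x ∈ segment ℝ u v := openSegment_subset_segment ℝ u v h
  rw [← convexHull_pair] at this
  exact convexHull_subset_affineSpan _ this

lemma collinear_of_openSegments {u v w x : E3}
    (hx : x ∈ openSegment ℝ u v) (hy : x ∈ openSegment ℝ v w) :
    Collinear ℝ ({u, v, w} : Set E3) := by
  by_cases huv : u = v
  · subst huv
    have h : ({u, u, w} : Set E3) = {u, w} := by simp
    rw [h]; exact collinear_pair ℝ u w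
  · have hxv : x ≠ v := by
      rintro rfl
      obtain ⟨s, t, hs, ht, hst, hsum⟩ := hx
      apply huv
      have h1 : s • u = x - t • x := eq_sub_of_add_eq hsum
      have h2 : x - t • x = (1 - t) • x := by rw [sub_smul, one_smul]
      have h3 : (1 : ℝ) - t = s := by linarith
      have h4 : s • u = s • x := by rw [h1, h2, h3]
      exact smul_right_injective _ (ne_of_gt hs) h4
    have hcu : Collinear ℝ ({x, u, v} : Set E3) :=
      collinear_insert_of_mem_affineSpan_pair (openSeg_mem_span hx)
    have hcw : Collinear ℝ ({x, v, w} : Set E3) :=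
      collinear_insert_of_mem_affineSpan_pair (openSeg_mem_span hy)
    have hu : u ∈ affineSpan ℝ ({v, x} : Set E3) :=
      hcu.mem_affineSpan_of_mem_of_ne (by simp) (by simp) (by simp) hxv.symm
    have hw : w ∈ affineSpan ℝ ({v, x} : Set E3) :=
      hcw.mem_affineSpan_of_mem_of_ne (by simp) (by simp) (by simp) hxv.symm
    have hv : v ∈ affineSpan ℝ ({v, x} : Set E3) :=
      mem_affineSpan ℝ (by simp)
    exact collinear_triple_of_mem_affineSpan_pair hu hv hw

/-- A line through two distinct points equals their affine span. -/
lemma line_eq_span {L : Set E3} (hL : IsLine L) {a q : E3} (haq : a ≠ q)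
    (ha : a ∈ L) (hq : q ∈ L) : L = (affineSpan ℝ ({a, q} : Set E3) : Set E3) := by
  obtain ⟨u, v, huv, rfl⟩ := hL
  have hle : affineSpan ℝ ({a, q} : Set E3) ≤ affineSpan ℝ ({u, v} : Set E3) := by
    apply affineSpan_le.2
    rintro x (rfl | rfl) <;> assumption
  have h1 : Module.finrank ℝ (affineSpan ℝ ({u, v} : Set E3)).direction = 1 := by
    rw [direction_affineSpan, vectorSpan_pair]
    exact finrank_span_singleton (vsub_ne_zero.2 huv)
  have h2 : Module.finrank ℝ (affineSpan ℝ ({a, q} : Set E3)).direction = 1 := by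
    rw [direction_affineSpan, vectorSpan_pair]
    exact finrank_span_singleton (vsub_ne_zero.2 haq)
  have hdir : (affineSpan ℝ ({a, q} : Set E3)).direction
      = (affineSpan ℝ ({u, v} : Set E3)).direction :=
    Submodule.eq_of_le_of_finrank_le (AffineSubspace.direction_le hle) (by omega)
  have h := AffineSubspace.ext_of_direction_eq hdir
    ⟨a, mem_affineSpan ℝ (by simp), ha⟩
  rw [h]

end Aux


/-- If a quadrisecant `L` of a hexagonal knot in general position meets the
interiors of the four edges `e12, e23, e45, e56` (edges `0, 1, 3, 4` here), then `L` lies in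
both planes `P2` (through `v1,v2,v3`, i.e. `P 1`) and `P5` (through `v4,v5,v6`, i.e. `P 4`);
hence `L = P2 ∩ P5` and such a quadrisecant is unique. -/
theorem stmt8 (H : Hexagon) (hgp : H.GeneralPosition) (L : Set E3) (hL : IsLine L)
    (a q p b : E3) (ha : a ∈ H.intEdge 0 ∩ L) (hq : q ∈ H.intEdge 1 ∩ L)
    (hp : p ∈ H.intEdge 3 ∩ L) (hb : b ∈ H.intEdge 4 ∩ L) :
    L ⊆ (H.P 1 : Set E3) ∧ L ⊆ (H.P 4 : Set E3) ∧ L = H.QLine 0 := by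
  obtain ⟨ha1, ha2⟩ := ha
  obtain ⟨hq1, hq2⟩ := hq
  obtain ⟨hp1, hp2⟩ := hp
  obtain ⟨hb1, hb2⟩ := hb
  have ha1 : a ∈ openSegment ℝ (H.v 0) (H.v 1) := ha1
  have hq1 : q ∈ openSegment ℝ (H.v 1) (H.v 2) := hq1
  have hp1 : p ∈ openSegment ℝ (H.v 3) (H.v 4) := hp1
  have hb1 : b ∈ openSegment ℝ (H.v 4) (H.v 5) := hb1
  have hP1 : H.P 1 = affineSpan ℝ ({H.v 0, H.v 1, H.v 2} : Set E3) := rfl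
  have hP4 : H.P 4 = affineSpan ℝ ({H.v 3, H.v 4, H.v 5} : Set E3) := rfl
  have haq : a ≠ q := fun h =>
    hgp.1 0 1 2 (by decide) (by decide) (by decide)
      (collinear_of_openSegments ha1 (h ▸ hq1))
  have hpb : p ≠ b := fun h =>
    hgp.1 3 4 5 (by decide) (by decide) (by decide)
      (collinear_of_openSegments hp1 (h ▸ hb1))
  have hLaq := line_eq_span hL haq ha2 hq2
  have hLpb := line_eq_span hL hpb hp2 hb2
  have hsub01 : affineSpan ℝ ({H.v 0, H.v 1} : Set E3) ≤ H.P 1 := by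
    rw [hP1]; exact affineSpan_mono ℝ (by intro y hy; rcases hy with rfl|rfl <;> simp)
  have hsub12 : affineSpan ℝ ({H.v 1, H.v 2} : Set E3) ≤ H.P 1 := by
    rw [hP1]; exact affineSpan_mono ℝ (by intro y hy; rcases hy with rfl|rfl <;> simp)
  have hsub34 : affineSpan ℝ ({H.v 3, H.v 4} : Set E3) ≤ H.P 4 := by
    rw [hP4]; exact affineSpan_mono ℝ (by intro y hy; rcases hy with rfl|rfl <;> simp)
  have hsub45 : affineSpan ℝ ({H.v 4, H.v 5} : Set E3) ≤ H.P 4 := by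
    rw [hP4]; exact affineSpan_mono ℝ (by intro y hy; rcases hy with rfl|rfl <;> simp)
  have haP1 : a ∈ H.P 1 := hsub01 (openSeg_mem_span ha1)
  have hqP1 : q ∈ H.P 1 := hsub12 (openSeg_mem_span hq1)
  have hpP4 : p ∈ H.P 4 := hsub34 (openSeg_mem_span hp1)
  have hbP4 : b ∈ H.P 4 := hsub45 (openSeg_mem_span hb1)
  have hLP1 : L ⊆ (H.P 1 : Set E3) := by
    rw [hLaq]
    exact affineSpan_le.2 (by rintro x (rfl | rfl) <;> assumption)
  have hLP4 : L ⊆ (H.P 4 : Set E3) := by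
    rw [hLpb]
    exact affineSpan_le.2 (by rintro x (rfl | rfl) <;> assumption)
  refine ⟨hLP1, hLP4, ?_⟩
  set M := H.P 1 ⊓ H.P 4 with hM
  have haM : a ∈ M := ⟨haP1, hLP4 ha2⟩
  have hqM : q ∈ M := ⟨hqP1, hLP4 hq2⟩
  have hMfin : Module.finrank ℝ M.direction ≤ 1 := by
    by_contra hcon
    push_neg at hcon
    have hMP1 : M ≤ H.P 1 := inf_le_left
    have hfin1 : Module.finrank ℝ (H.P 1).direction ≤ 2 := by
      rw [hP1, direction_affineSpan]
      exact coplanar_iff_finrank_le_two.1 (coplanar_triple ℝ (H.v 0) (H.v 1) (H.v 2))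
    have hdeq : M.direction = (H.P 1).direction :=
      Submodule.eq_of_le_of_finrank_le (AffineSubspace.direction_le hMP1) (by omega)
    have hMeq : M = H.P 1 :=
      AffineSubspace.ext_of_direction_eq hdeq ⟨a, haM, haP1⟩
    have hv0 : H.v 0 ∈ H.P 4 := by
      have h0 : H.v 0 ∈ H.P 1 := by rw [hP1]; exact mem_affineSpan ℝ (by simp)
      rw [← hMeq] at h0
      exact h0.2
    have hcop : Coplanar ℝ ({H.v 0, H.v 3, H.v 4, H.v 5} : Set E3) := by
      have h := (coplanar_insert_iff_of_mem_affineSpan (k := ℝ)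
        (p := H.v 0) (s := ({H.v 3, H.v 4, H.v 5} : Set E3)) (by rwa [hP4] at hv0)).2
        (coplanar_triple ℝ _ _ _)
      simpa using h
    exact hgp.2 0 3 4 5 (by decide) (by decide) (by decide) (by decide) (by decide)
      (by decide) hcop
  have hTle : affineSpan ℝ ({a, q} : Set E3) ≤ M :=
    affineSpan_le.2 (by rintro x (rfl | rfl) <;> assumption)
  have hT1 : Module.finrank ℝ (affineSpan ℝ ({a, q} : Set E3)).direction = 1 := by
    rw [direction_affineSpan, vectorSpan_pair]
    exact finrank_span_singleton (vsub_ne_zero.2 haq)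
  have hdeq2 : (affineSpan ℝ ({a, q} : Set E3)).direction = M.direction :=
    Submodule.eq_of_le_of_finrank_le (AffineSubspace.direction_le hTle) (by omega)
  have hTM : affineSpan ℝ ({a, q} : Set E3) = M :=
    AffineSubspace.ext_of_direction_eq hdeq2 ⟨a, mem_affineSpan ℝ (by simp), haM⟩
  have hQ : H.QLine 0 = (M : Set E3) := rfl
  rw [hQ, ← hTM, hLaq]
end
end

section
/- Let K be a hexagonal trefoil knot with the Huh–Jeon pattern, and let L1 = P2 ∩ P5 be its quadrisecant meeting e12, e23, e45, e56 at points a, q, p, b respectively. Then along the line L1 the points occur in the order b, q, p, a (up to reversal). -/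
noncomputable section

section AuxLemmas
open Set


private lemma hull3_eq (u0 u1 u2 : E3) :
    convexHull ℝ ({u0, u1, u2} : Set E3) = ⋃ y ∈ segment ℝ u1 u2, segment ℝ u0 y := by
  rw [convexHull_insert ⟨u1, by simp⟩]
  simp only [convexHull_pair, convexJoin_singleton_left]

private lemma mem_hull3 {u0 u1 u2 x : E3} :
    x ∈ convexHull ℝ ({u0, u1, u2} : Set E3) ↔
      ∃ α β γ : ℝ, 0 ≤ α ∧ 0 ≤ β ∧ 0 ≤ γ ∧ α + β + γ = 1 ∧ α • u0 + β • u1 + γ • u2 = x := by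
  rw [hull3_eq]
  simp only [Set.mem_iUnion, exists_prop]
  constructor
  · rintro ⟨y, hy, hx⟩
    obtain ⟨c, d, hc, hd, hcd, rfl⟩ := hy
    obtain ⟨e, f, he, hf, hef, rfl⟩ := hx
    refine ⟨e, f * c, f * d, he, by positivity, by positivity, by nlinarith, by module⟩
  · rintro ⟨α, β, γ, hα, hβ, hγ, hsum, rfl⟩
    by_cases hbc : β + γ = 0
    · have hβ0 : β = 0 := by linarith
      have hγ0 : γ = 0 := by linarith
      have hα1 : α = 1 := by linarith
      refine ⟨u1, left_mem_segment ℝ u1 u2, ?_⟩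
      rw [hβ0, hγ0, hα1]
      simpa using left_mem_segment ℝ u0 u1
    · have ht : 0 < β + γ := lt_of_le_of_ne (by linarith) (Ne.symm hbc)
      refine ⟨(β / (β + γ)) • u1 + (γ / (β + γ)) • u2,
        ⟨β / (β + γ), γ / (β + γ), by positivity, by positivity, by field_simp, rfl⟩,
        ⟨α, β + γ, hα, ht.le, by linarith, ?_⟩⟩
      rw [smul_add, smul_smul, smul_smul, mul_div_cancel₀ _ hbc, mul_div_cancel₀ _ hbc, add_assoc]

private lemma indep3 {u0 u1 u2 : E3} (hnc : ¬ Collinear ℝ ({u0, u1, u2} : Set E3)) :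
    ∀ a b : ℝ, a • (u1 - u0) + b • (u2 - u0) = 0 → a = 0 ∧ b = 0 := by
  intro a b hab
  have hb : b = 0 := by
    by_contra hb
    refine hnc ((collinear_iff_of_mem (Set.mem_insert _ _)).2 ⟨u1 - u0, ?_⟩)
    rintro w hw
    simp only [Set.mem_insert_iff, Set.mem_singleton_iff] at hw
    rcases hw with h | h | h <;> rw [h]
    · exact ⟨0, by simp⟩
    · exact ⟨1, by rw [vadd_eq_add]; module⟩
    · refine ⟨-a / b, ?_⟩
      rw [vadd_eq_add]
      have h1 : b • (u2 - u0) = (-a) • (u1 - u0) := by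
        linear_combination (norm := module) hab
      have h2 : u2 - u0 = (-a / b) • (u1 - u0) := by
        rw [div_eq_mul_inv, mul_comm, ← smul_smul, ← h1, smul_smul,
          inv_mul_cancel₀ hb, one_smul]
      linear_combination (norm := module) h2
  refine ⟨?_, hb⟩
  rw [hb, zero_smul, add_zero] at hab
  by_contra ha
  have hu : u1 - u0 = 0 := by
    rcases smul_eq_zero.1 hab with h | h
    · exact absurd h ha
    · exact h
  have hu10 : u1 = u0 := by rwa [sub_eq_zero] at hu
  refine hnc ((collinear_iff_of_mem (Set.mem_insert _ _)).2 ⟨u2 - u0, ?_⟩)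
  rintro w hw
  simp only [Set.mem_insert_iff, Set.mem_singleton_iff] at hw
  rcases hw with h | h | h <;> rw [h]
  · exact ⟨0, by simp⟩
  · exact ⟨0, by simp [hu10]⟩
  · exact ⟨1, by rw [vadd_eq_add]; module⟩

private lemma unique3 {u0 u1 u2 : E3} (hnc : ¬ Collinear ℝ ({u0, u1, u2} : Set E3))
    {α β γ α' β' γ' : ℝ} (h1 : α + β + γ = 1) (h2 : α' + β' + γ' = 1)
    (he : α • u0 + β • u1 + γ • u2 = α' • u0 + β' • u1 + γ' • u2) :
    α = α' ∧ β = β' ∧ γ = γ' := by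
  have e1 : (β - β') • (u1 - u0) + (γ - γ') • (u2 - u0) = 0 := by
    have hs : α - α' + (β - β') + (γ - γ') = 0 := by linarith
    have e2 : (β - β') • (u1 - u0) + (γ - γ') • (u2 - u0)
        = (α • u0 + β • u1 + γ • u2) - (α' • u0 + β' • u1 + γ' • u2)
          - (α - α' + (β - β') + (γ - γ')) • u0 := by module
    rw [he, hs] at e2
    simpa using e2
  obtain ⟨hB, hC⟩ := indep3 hnc _ _ e1
  have hβ : β = β' := by linarith
  have hγ : γ = γ' := by linarith
  exact ⟨by linarith, hβ, hγ⟩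

private lemma escape {s : Set E3} {q u : E3} (hu : u ∈ affineSpan ℝ s)
    (hq : q ∈ intrinsicInterior ℝ s)
    (hw : ∀ ε : ℝ, 0 < ε → q + ε • (q - u) ∉ s) : False := by
  have hqs : q ∈ s := intrinsicInterior_subset hq
  have hqS : q ∈ affineSpan ℝ s := subset_affineSpan ℝ s hqs
  rw [mem_intrinsicInterior] at hq
  obtain ⟨y, hy, hyq⟩ := hq
  have hwS : ∀ ε : ℝ, q + ε • (q - u) ∈ affineSpan ℝ s := by
    intro ε
    have h2 := (affineSpan ℝ s).smul_vsub_vadd_mem ε hqS hu hqS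
    have h3 : ε • (q -ᵥ u) +ᵥ q = q + ε • (q - u) := by
      rw [vsub_eq_sub, vadd_eq_add]; module
    rwa [h3] at h2
  set W : ℝ → (affineSpan ℝ s : Set E3) := fun ε => ⟨q + ε • (q - u), hwS ε⟩ with hW
  have hWc : Continuous W := by
    apply Continuous.subtype_mk
    fun_prop
  have hW0 : W 0 = y := Subtype.ext (by simp [hW, hyq])
  have hev : ∀ᶠ ε in nhds (0 : ℝ), W ε ∈ interior (((↑) : _ → E3) ⁻¹' s) := by
    refine hWc.continuousAt.eventually_mem ?_
    exact isOpen_interior.mem_nhds (hW0 ▸ hy)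
  rw [Metric.eventually_nhds_iff] at hev
  obtain ⟨δ, hδ, hball⟩ := hev
  have hmem := hball (y := δ / 2) (by rw [Real.dist_eq]; rw [sub_zero, abs_of_pos (by linarith)]; linarith)
  have hfin := interior_subset hmem
  rw [Set.mem_preimage] at hfin
  exact hw (δ / 2) (by linarith) hfin

private lemma first_coord_pos {u0 u1 u2 q : E3} (hnc : ¬ Collinear ℝ ({u0, u1, u2} : Set E3))
    (hq : q ∈ intrinsicInterior ℝ (convexHull ℝ ({u0, u1, u2} : Set E3)))
    {α β γ : ℝ} (hα : 0 ≤ α) (hβ : 0 ≤ β) (hγ : 0 ≤ γ) (hsum : α + β + γ = 1)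
    (heq : α • u0 + β • u1 + γ • u2 = q) : 0 < α := by
  rcases hα.lt_or_eq with h | h
  · exact h
  exfalso
  refine escape (u := u0) ?_ hq ?_
  · exact subset_affineSpan ℝ _ (subset_convexHull ℝ _ (Set.mem_insert _ _))
  · intro ε hε hmem
    obtain ⟨e, f, g, he, hf, hg, hsum', heq'⟩ := mem_hull3.1 hmem
    have h1ε : (0 : ℝ) < 1 + ε := by linarith
    have h3 : q + ε • (q - u0) = e • u0 + f • u1 + g • u2 := heq'.symm
    have h2 : (1 + ε) • q = (e + ε) • u0 + f • u1 + g • u2 := by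
      linear_combination (norm := module) h3
    have hcmb : ((e + ε) / (1 + ε)) • u0 + (f / (1 + ε)) • u1 + (g / (1 + ε)) • u2 = q := by
      have h4 : ((e + ε) / (1 + ε)) • u0 + (f / (1 + ε)) • u1 + (g / (1 + ε)) • u2
          = (1 + ε)⁻¹ • ((1 + ε) • q) := by
        rw [h2]; module
      rw [h4, smul_smul, inv_mul_cancel₀ h1ε.ne', one_smul]
    have hsum2 : (e + ε) / (1 + ε) + f / (1 + ε) + g / (1 + ε) = 1 := by
      field_simp
      linarith
    obtain ⟨hA, -, -⟩ := unique3 hnc hsum2 hsum (hcmb.trans heq.symm)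
    have hApos : 0 < (e + ε) / (1 + ε) := div_pos (by linarith) h1ε
    rw [hA, ← h] at hApos
    exact lt_irrefl _ hApos

private lemma coords_pos {u0 u1 u2 q : E3} (hnc : ¬ Collinear ℝ ({u0, u1, u2} : Set E3))
    (hq : q ∈ intrinsicInterior ℝ (convexHull ℝ ({u0, u1, u2} : Set E3))) :
    ∃ α β γ : ℝ, 0 < α ∧ 0 < β ∧ 0 < γ ∧ α + β + γ = 1 ∧ α • u0 + β • u1 + γ • u2 = q := by
  obtain ⟨α, β, γ, hα, hβ, hγ, hsum, heq⟩ := mem_hull3.1 (intrinsicInterior_subset hq)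
  have hset1 : ({u0, u1, u2} : Set E3) = {u1, u2, u0} := by ext w; simp; tauto
  have hset2 : ({u0, u1, u2} : Set E3) = {u2, u0, u1} := by ext w; simp; tauto
  refine ⟨α, β, γ, first_coord_pos hnc hq hα hβ hγ hsum heq, ?_, ?_, hsum, heq⟩
  · exact first_coord_pos (hset1 ▸ hnc) (hset1 ▸ hq) hβ hγ hα (by linarith)
      (by linear_combination (norm := module) heq)
  · exact first_coord_pos (hset2 ▸ hnc) (hset2 ▸ hq) hγ hα hβ (by linarith)
      (by linear_combination (norm := module) heq)

private lemma key {u0 u1 u2 p q b : E3}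
    (hnc : ¬ Collinear ℝ ({u0, u1, u2} : Set E3))
    (hq : q ∈ intrinsicInterior ℝ (convexHull ℝ ({u0, u1, u2} : Set E3)))
    (hp : p ∈ openSegment ℝ u0 u1) (hb : b ∈ openSegment ℝ u1 u2)
    (hcol : Collinear ℝ ({p, q, b} : Set E3)) : Sbtw ℝ b q p := by
  obtain ⟨α, β, γ, hα, hβ, hγ, hsum, heq⟩ := coords_pos hnc hq
  obtain ⟨s1, s2, hs1, hs2, hs, hpe⟩ := hp
  obtain ⟨t1, t2, ht1, ht2, ht, hbe⟩ := hb
  have hpe3 : s1 • u0 + s2 • u1 + (0 : ℝ) • u2 = p := by rw [← hpe]; module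
  have hbe3 : (0 : ℝ) • u0 + t1 • u1 + t2 • u2 = b := by rw [← hbe]; module
  have hpb : p ≠ b := by
    intro h
    obtain ⟨hA, -, -⟩ := unique3 hnc (by linarith) (by linarith) (hpe3.trans (h.trans hbe3.symm))
    linarith
  have hqb : q ≠ b := by
    intro h
    obtain ⟨hA, -, -⟩ := unique3 hnc hsum (by linarith) (heq.trans (h.trans hbe3.symm))
    linarith
  have hqp : q ≠ p := by
    intro h
    obtain ⟨-, -, hC⟩ := unique3 hnc hsum (by linarith) (heq.trans (h.trans hpe3.symm))
    linarith
  -- from collinearity, write q = p + u • (b - p)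
  rw [collinear_iff_of_mem (Set.mem_insert p {q, b})] at hcol
  obtain ⟨v, hv⟩ := hcol
  obtain ⟨rq, hrq⟩ := hv q (by simp)
  obtain ⟨rb, hrb⟩ := hv b (by simp)
  rw [vadd_eq_add] at hrq hrb
  have hvb : rb • v = b - p := by rw [hrb]; module
  have hrb0 : rb ≠ 0 := by
    intro h
    rw [h, zero_smul] at hvb
    exact hpb (sub_eq_zero.1 hvb.symm).symm
  have hq' : q = p + (rq / rb) • (b - p) := by
    rw [hrq, ← hvb, smul_smul, div_mul_cancel₀ _ hrb0]
    module
  set u : ℝ := rq / rb with hu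
  have hqc : ((1 - u) * s1) • u0 + ((1 - u) * s2 + u * t1) • u1 + (u * t2) • u2 = q := by
    rw [hq', ← hpe, ← hbe]; module
  have hsum2 : (1 - u) * s1 + ((1 - u) * s2 + u * t1) + u * t2 = 1 := by
    have : (1 - u) * s1 + ((1 - u) * s2 + u * t1) + u * t2
        = (1 - u) * (s1 + s2) + u * (t1 + t2) := by ring
    rw [this, hs, ht]; ring
  obtain ⟨hA, -, hC⟩ := unique3 hnc hsum2 hsum (hqc.trans heq.symm)
  have hu1 : 0 < 1 - u := by
    by_contra hc
    push_neg at hc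
    nlinarith
  have hu0 : 0 < u := by
    by_contra hc
    push_neg at hc
    nlinarith
  have hqos : q ∈ openSegment ℝ b p :=
    ⟨u, 1 - u, hu0, hu1, by ring, by rw [hq']; module⟩
  exact ⟨mem_segment_iff_wbtw.1 (openSegment_subset_segment ℝ b p hqos), hqb, hqp⟩

private lemma seg_plane_unique {S : AffineSubspace ℝ E3} {v w x y : E3} (hv : v ∉ S)
    (hx : x ∈ segment ℝ v w) (hy : y ∈ segment ℝ v w) (hxS : x ∈ S) (hyS : y ∈ S) : x = y := by
  obtain ⟨a1, a2, ha1, ha2, ha, hxe⟩ := hx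
  obtain ⟨b1, b2, hb1, hb2, hb, hye⟩ := hy
  by_cases h : a2 = b2
  · have h1 : a1 = b1 := by linarith
    rw [← hxe, ← hye, h1, h]
  · exfalso
    apply hv
    have hxy : x - y = (a2 - b2) • (w - v) := by
      have h1 : a1 = 1 - a2 := by linarith
      have h2 : b1 = 1 - b2 := by linarith
      rw [← hxe, ← hye, h1, h2]; module
    have hvx : v = x - (a2 / (a2 - b2)) • (x - y) := by
      have h1 : a1 = 1 - a2 := by linarith
      rw [hxy, smul_smul, div_mul_cancel₀ _ (sub_ne_zero.2 h), ← hxe, h1]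
      module
    rw [hvx]
    have h2 := S.smul_vsub_vadd_mem (-(a2 / (a2 - b2))) hxS hyS hxS
    have h3 : (-(a2 / (a2 - b2))) • (x -ᵥ y) +ᵥ x = x - (a2 / (a2 - b2)) • (x - y) := by
      rw [vsub_eq_sub, vadd_eq_add]; module
    rwa [h3] at h2

private lemma collinear_of_small {S : AffineSubspace ℝ E3}
    (hS : Module.finrank ℝ S.direction ≤ 1) {x y z : E3}
    (hx : x ∈ S) (hy : y ∈ S) (hz : z ∈ S) : Collinear ℝ ({x, y, z} : Set E3) := by
  have hsub : affineSpan ℝ ({x, y, z} : Set E3) ≤ S := by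
    apply affineSpan_le.2
    rintro w hw
    simp only [Set.mem_insert_iff, Set.mem_singleton_iff] at hw
    rcases hw with rfl | rfl | rfl <;> assumption
  have hdir := AffineSubspace.direction_le hsub
  rw [direction_affineSpan] at hdir
  rw [collinear_iff_finrank_le_one]
  exact le_trans (Submodule.finrank_mono hdir) hS

private lemma finrank_plane {w0 w1 w2 : E3} (hnc : ¬ Collinear ℝ ({w0, w1, w2} : Set E3)) :
    Module.finrank ℝ (affineSpan ℝ ({w0, w1, w2} : Set E3)).direction = 2 := by
  rw [direction_affineSpan]
  have hub : Module.finrank ℝ (vectorSpan ℝ ({w0, w1, w2} : Set E3)) ≤ 2 :=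
    coplanar_iff_finrank_le_two.1 (coplanar_triple (k := ℝ) w0 w1 w2)
  have hlb : ¬ Module.finrank ℝ (vectorSpan ℝ ({w0, w1, w2} : Set E3)) ≤ 1 := by
    intro h
    exact hnc (collinear_iff_finrank_le_one.2 h)
  omega

end AuxLemmas

/-- For a hexagonal trefoil knot with the Huh–Jeon pattern, the quadrisecant
`L1 = P2 ∩ P5` (= `QLine 0`) meets `e12, e23, e45, e56` (edges `0,1,3,4` here) at points
`a, q, p, b` which occur along the line in the order `b, q, p, a` (up to reversal). -/
theorem stmt11 (H : Hexagon) (hgp : H.GeneralPosition) (hhj : H.HuhJeon)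
    (htre : IsTrefoil H.K)
    (a q p b : E3) (ha : a ∈ H.edge 0 ∩ H.QLine 0) (hq : q ∈ H.edge 1 ∩ H.QLine 0)
    (hp : p ∈ H.edge 3 ∩ H.QLine 0) (hb : b ∈ H.edge 4 ∩ H.QLine 0) :
    Sbtw ℝ b q p ∧ Sbtw ℝ q p a := by
  clear htre
  obtain ⟨ha1, ha2⟩ := ha
  obtain ⟨hq1, hq2⟩ := hq
  obtain ⟨hp1, hp2⟩ := hp
  obtain ⟨hb1, hb2⟩ := hb
  -- unfold the Fin-indexed definitions
  have hP1 : H.P 1 = affineSpan ℝ ({H.v 0, H.v 1, H.v 2} : Set E3) := rfl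
  have hP4 : H.P 4 = affineSpan ℝ ({H.v 3, H.v 4, H.v 5} : Set E3) := rfl
  have hQ : H.QLine 0 = (↑(H.P 1) : Set E3) ∩ ↑(H.P 4) := rfl
  have he0 : H.edge 0 = segment ℝ (H.v 0) (H.v 1) := rfl
  have he1 : H.edge 1 = segment ℝ (H.v 1) (H.v 2) := rfl
  have he3 : H.edge 3 = segment ℝ (H.v 3) (H.v 4) := rfl
  have he4 : H.edge 4 = segment ℝ (H.v 4) (H.v 5) := rfl
  have hd4 : H.disk 4 = convexHull ℝ ({H.v 3, H.v 4, H.v 5} : Set E3) := rfl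
  have hd1 : H.disk 1 = convexHull ℝ ({H.v 0, H.v 1, H.v 2} : Set E3) := rfl
  have hie1 : H.intEdge 1 = openSegment ℝ (H.v 1) (H.v 2) := rfl
  have hie3 : H.intEdge 3 = openSegment ℝ (H.v 3) (H.v 4) := rfl
  rw [hQ] at ha2 hq2 hp2 hb2
  rw [he0] at ha1
  rw [he1] at hq1
  rw [he3] at hp1
  rw [he4] at hb1
  have haP1 : a ∈ H.P 1 := ha2.1
  have haP4 : a ∈ H.P 4 := ha2.2
  have hqP1 : q ∈ H.P 1 := hq2.1
  have hqP4 : q ∈ H.P 4 := hq2.2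
  have hpP1 : p ∈ H.P 1 := hp2.1
  have hpP4 : p ∈ H.P 4 := hp2.2
  have hbP1 : b ∈ H.P 1 := hb2.1
  have hbP4 : b ∈ H.P 4 := hb2.2
  -- general position facts
  have hnotin : ∀ i j k l : Fin 6, i ≠ j → i ≠ k → i ≠ l → j ≠ k → j ≠ l → k ≠ l →
      H.v i ∉ affineSpan ℝ ({H.v j, H.v k, H.v l} : Set E3) := by
    intro i j k l h1 h2 h3 h4 h5 h6 hmem
    exact hgp.2 i j k l h1 h2 h3 h4 h5 h6
      ((coplanar_insert_iff_of_mem_affineSpan hmem).2 (coplanar_triple (k := ℝ) _ _ _))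
  have hnc012 : ¬ Collinear ℝ ({H.v 0, H.v 1, H.v 2} : Set E3) :=
    hgp.1 0 1 2 (by decide) (by decide) (by decide)
  have hnc345 : ¬ Collinear ℝ ({H.v 3, H.v 4, H.v 5} : Set E3) :=
    hgp.1 3 4 5 (by decide) (by decide) (by decide)
  have hv0P4 : H.v 0 ∉ H.P 4 := by
    rw [hP4]; exact hnotin 0 3 4 5 (by decide) (by decide) (by decide) (by decide) (by decide) (by decide)
  have hv1P4 : H.v 1 ∉ H.P 4 := by
    rw [hP4]; exact hnotin 1 3 4 5 (by decide) (by decide) (by decide) (by decide) (by decide) (by decide)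
  have hv2P4 : H.v 2 ∉ H.P 4 := by
    rw [hP4]; exact hnotin 2 3 4 5 (by decide) (by decide) (by decide) (by decide) (by decide) (by decide)
  have hv3P1 : H.v 3 ∉ H.P 1 := by
    rw [hP1]; exact hnotin 3 0 1 2 (by decide) (by decide) (by decide) (by decide) (by decide) (by decide)
  have hv4P1 : H.v 4 ∉ H.P 1 := by
    rw [hP1]; exact hnotin 4 0 1 2 (by decide) (by decide) (by decide) (by decide) (by decide) (by decide)
  have hv5P1 : H.v 5 ∉ H.P 1 := by
    rw [hP1]; exact hnotin 5 0 1 2 (by decide) (by decide) (by decide) (by decide) (by decide) (by decide)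
  -- the four points are interior to their edges
  have hao : a ∈ openSegment ℝ (H.v 0) (H.v 1) :=
    mem_openSegment_of_ne_left_right (fun h => hv0P4 (h ▸ haP4)) (fun h => hv1P4 (h ▸ haP4)) ha1
  have hqo : q ∈ openSegment ℝ (H.v 1) (H.v 2) :=
    mem_openSegment_of_ne_left_right (fun h => hv1P4 (h ▸ hqP4)) (fun h => hv2P4 (h ▸ hqP4)) hq1
  have hpo : p ∈ openSegment ℝ (H.v 3) (H.v 4) :=
    mem_openSegment_of_ne_left_right (fun h => hv3P1 (h ▸ hpP1)) (fun h => hv4P1 (h ▸ hpP1)) hp1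
  have hbo : b ∈ openSegment ℝ (H.v 4) (H.v 5) :=
    mem_openSegment_of_ne_left_right (fun h => hv4P1 (h ▸ hbP1)) (fun h => hv5P1 (h ▸ hbP1)) hb1
  -- the Huh–Jeon pattern puts q and p in the interiors of disks 4 and 1
  have h14 : (H.intEdge 1 ∩ intrinsicInterior ℝ (H.disk 4)).Nonempty := (hhj 1 4).2 (by simp)
  obtain ⟨x, hx1, hx2⟩ := h14
  rw [hie1] at hx1
  rw [hd4] at hx2
  have hxP4 : x ∈ H.P 4 := by
    rw [hP4]
    exact convexHull_subset_affineSpan _ (intrinsicInterior_subset hx2)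
  have hxq : x = q :=
    seg_plane_unique hv1P4 (openSegment_subset_segment ℝ _ _ hx1) hq1 hxP4 hqP4
  have hqint : q ∈ intrinsicInterior ℝ (convexHull ℝ ({H.v 3, H.v 4, H.v 5} : Set E3)) :=
    hxq ▸ hx2
  have h31 : (H.intEdge 3 ∩ intrinsicInterior ℝ (H.disk 1)).Nonempty := (hhj 3 1).2 (by simp)
  obtain ⟨x', hx1', hx2'⟩ := h31
  rw [hie3] at hx1'
  rw [hd1] at hx2'
  have hxP1 : x' ∈ H.P 1 := by
    rw [hP1]
    exact convexHull_subset_affineSpan _ (intrinsicInterior_subset hx2')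
  have hxp : x' = p :=
    seg_plane_unique hv3P1 (openSegment_subset_segment ℝ _ _ hx1') hp1 hxP1 hpP1
  have hpint : p ∈ intrinsicInterior ℝ (convexHull ℝ ({H.v 0, H.v 1, H.v 2} : Set E3)) :=
    hxp ▸ hx2'
  -- the quadrisecant line is a line: dimension count
  have hr1 : Module.finrank ℝ (H.P 1).direction = 2 := by rw [hP1]; exact finrank_plane hnc012
  have hr4 : Module.finrank ℝ (H.P 4).direction = 2 := by rw [hP4]; exact finrank_plane hnc345
  have hE3 : Module.finrank ℝ E3 = 3 := by simp
  have hsup3 : ¬ (Module.finrank ℝ ↥((H.P 1).direction ⊔ (H.P 4).direction) ≤ 2) := by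
    intro hle
    have h1 : (H.P 1).direction = (H.P 1).direction ⊔ (H.P 4).direction :=
      Submodule.eq_of_le_of_finrank_le le_sup_left (by rw [hr1]; exact hle)
    have h4 : (H.P 4).direction = (H.P 1).direction ⊔ (H.P 4).direction :=
      Submodule.eq_of_le_of_finrank_le le_sup_right (by rw [hr4]; exact hle)
    have hPP : H.P 1 = H.P 4 :=
      AffineSubspace.ext_of_direction_eq (h1.trans h4.symm) ⟨q, hqP1, hqP4⟩
    have hv3 : H.v 3 ∈ H.P 4 := by
      rw [hP4]; exact subset_affineSpan ℝ _ (by simp)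
    rw [← hPP] at hv3
    exact hv3P1 hv3
  have hsuple := Submodule.finrank_le ((H.P 1).direction ⊔ (H.P 4).direction)
  rw [hE3] at hsuple
  have hsum := Submodule.finrank_sup_add_finrank_inf_eq (H.P 1).direction (H.P 4).direction
  have hmono := Submodule.finrank_mono (AffineSubspace.direction_inf (H.P 1) (H.P 4))
  have hinf : Module.finrank ℝ ((H.P 1 ⊓ H.P 4).direction) ≤ 1 := by omega
  -- collinearity of the four points along the quadrisecant
  have hcol1 : Collinear ℝ ({p, q, b} : Set E3) :=
    collinear_of_small hinf ((AffineSubspace.mem_inf_iff _ _ _).2 ⟨hpP1, hpP4⟩)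
      ((AffineSubspace.mem_inf_iff _ _ _).2 ⟨hqP1, hqP4⟩)
      ((AffineSubspace.mem_inf_iff _ _ _).2 ⟨hbP1, hbP4⟩)
  have hcol2 : Collinear ℝ ({a, p, q} : Set E3) :=
    collinear_of_small hinf ((AffineSubspace.mem_inf_iff _ _ _).2 ⟨haP1, haP4⟩)
      ((AffineSubspace.mem_inf_iff _ _ _).2 ⟨hpP1, hpP4⟩)
      ((AffineSubspace.mem_inf_iff _ _ _).2 ⟨hqP1, hqP4⟩)
  exact ⟨key hnc345 hqint hpo hbo hcol1, key hnc012 hpint hao hqo hcol2⟩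
end
end
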